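/- For m ≥ 1, any binary linear code of length 31m + 13 and dimension 5 has minimum distance at most 16m + 6; and no even-like binary [15m + 7, 4] code has minimum distance ≥ 8m + 4 (since the Griesmer bound gives d(15m+7,4) ≤ 8m+3). Consequently, combined with the shortening lemma, there is no binary self-orthogonal [31m + 13, 5, 16m + 6] code. -/

import Mathlib

/-- A binary linear code is self-orthogonal if all pairs of codewords have zero
inner product over `F_2`. -/
def IsSO {n : ℕ} (C : Submodule (ZMod 2) (Fin n → ZMod 2)) : Prop :=
  ∀ x ∈ C, ∀ y ∈ C, ∑ i, x i * y i = 0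

/-- `C` has minimum distance exactly `d`. -/
def IsMinDist {n : ℕ} (C : Submodule (ZMod 2) (Fin n → ZMod 2)) (d : ℕ) : Prop :=
  (∃ x ∈ C, x ≠ 0 ∧ hammingNorm x = d) ∧ ∀ x ∈ C, x ≠ 0 → d ≤ hammingNorm x

/-! Averaging weights over a binary linear `[n, k]` code: a coordinate that is not identically
zero on the code is nonzero on exactly half of the codewords, so `(2^k - 1) d ≤ n 2^(k-1)`
(Plotkin). For `k = 5`, `n = 31m + 13` this gives `d ≤ 16m + 6`, and for `k = 4`, `n = 15m + 7`
it excludes `d ≥ 8m + 4`.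

If `C` is self-orthogonal with a codeword `c` of minimum weight `w = 16m + 6`, restrict `C` to
the `15m + 7` zeros of `c`. Only `0` and `c` vanish there, so the dimension drops to `4`; the
restrictions have even weight because `⟨y, y⟩ = ⟨y, c⟩ = 0`; and as
`wt y + wt (y + c) = w + 2 wt (y restricted)`, they have weight at least `w / 2 = 8m + 3`,
hence at least `8m + 4`. -/

open Finset Module

theorem sum_hammingNorm_eq_sum_card_filter {α ι β : Type*} [Fintype ι] [Zero β] [DecidableEq β]
    (s : Finset α) (f : α → ι → β) :
    ∑ a ∈ s, hammingNorm (f a) = ∑ i, #{a ∈ s | f a i ≠ 0} := by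
  simp only [hammingNorm, card_filter]
  exact sum_comm

-- Translation by a codeword `z` with `z i ≠ 0` maps the codewords nonzero at `i` injectively
-- to those vanishing at `i`.
theorem two_mul_card_filter_apply_ne_zero_le {ι : Type*} (C : Submodule (ZMod 2) (ι → ZMod 2))
    [Fintype C] (i : ι) : 2 * #{x : C | (x : ι → ZMod 2) i ≠ 0} ≤ Fintype.card C := by
  have hsplit := card_filter_add_card_filter_not (s := (univ : Finset C))
    (p := fun x : C ↦ (x : ι → ZMod 2) i ≠ 0)
  rw [card_univ] at hsplit
  by_cases h : ∃ z : C, (z : ι → ZMod 2) i ≠ 0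
  · obtain ⟨z, hz⟩ := h
    have ne_zero_add_ne_zero : ∀ a b : ZMod 2, a ≠ 0 → b ≠ 0 → a + b = 0 := by decide
    have : #{x : C | (x : ι → ZMod 2) i ≠ 0} ≤ #{x : C | ¬(x : ι → ZMod 2) i ≠ 0} :=
      card_le_card_of_injOn (· + z)
        (fun x hx ↦ by
          simp only [coe_filter, mem_univ, true_and, Set.mem_ofPred_eq, not_not, Submodule.coe_add,
            Pi.add_apply] at hx ⊢
          exact ne_zero_add_ne_zero _ _ hx hz) (add_left_injective z).injOn
    omega
  · push Not at h
    simp [h]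

theorem plotkin_bound {ι : Type*} [Fintype ι] (C : Submodule (ZMod 2) (ι → ZMod 2)) {d : ℕ}
    (hd : ∀ x ∈ C, x ≠ 0 → d ≤ hammingNorm x) :
    2 * (2 ^ finrank (ZMod 2) C - 1) * d ≤ 2 ^ finrank (ZMod 2) C * Fintype.card ι := by
  classical
  have hcard : Fintype.card C = 2 ^ finrank (ZMod 2) C := by
    rw [Module.card_eq_pow_finrank (K := ZMod 2), ZMod.card]
  have lower : (2 ^ finrank (ZMod 2) C - 1) * d ≤ ∑ x : C, hammingNorm (x : ι → ZMod 2) :=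
    calc (2 ^ finrank (ZMod 2) C - 1) * d = #((univ : Finset C).erase 0) • d := by
          rw [card_erase_of_mem (mem_univ _), card_univ, hcard, smul_eq_mul]
      _ ≤ ∑ x ∈ (univ : Finset C).erase 0, hammingNorm (x : ι → ZMod 2) :=
          card_nsmul_le_sum _ _ _ fun x hx ↦ hd x x.2 (by simpa using ne_of_mem_erase hx)
      _ ≤ ∑ x : C, hammingNorm (x : ι → ZMod 2) := sum_le_sum_of_subset (erase_subset _ _)
  have upper :
      2 * ∑ x : C, hammingNorm (x : ι → ZMod 2) ≤ 2 ^ finrank (ZMod 2) C * Fintype.card ι :=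
    calc 2 * ∑ x : C, hammingNorm (x : ι → ZMod 2)
        = ∑ i, 2 * #{x : C | (x : ι → ZMod 2) i ≠ 0} := by
          rw [sum_hammingNorm_eq_sum_card_filter, mul_sum]
      _ ≤ ∑ _i : ι, Fintype.card C :=
          sum_le_sum fun i _ ↦ two_mul_card_filter_apply_ne_zero_le C i
      _ = 2 ^ finrank (ZMod 2) C * Fintype.card ι := by simp [hcard, mul_comm]
  calc 2 * (2 ^ finrank (ZMod 2) C - 1) * d = 2 * ((2 ^ finrank (ZMod 2) C - 1) * d) := mul_assoc ..
    _ ≤ _ := (Nat.mul_le_mul_left 2 lower).trans upper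

section Residual

variable {ι : Type*}

def restrictToZeros (c : ι → ZMod 2) : (ι → ZMod 2) →ₗ[ZMod 2] ({i // c i = 0} → ZMod 2) :=
  LinearMap.funLeft (ZMod 2) (ZMod 2) Subtype.val

@[simp]
theorem restrictToZeros_apply (c y : ι → ZMod 2) (j : {i // c i = 0}) :
    restrictToZeros c y j = y j :=
  rfl

@[simp]
theorem restrictToZeros_self (c : ι → ZMod 2) : restrictToZeros c c = 0 :=
  funext fun j ↦ j.2

@[simp]
theorem restrictToZeros_add_self (c y : ι → ZMod 2) :
    restrictToZeros c (y + c) = restrictToZeros c y := by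
  rw [map_add, restrictToZeros_self, add_zero]

-- The paper's shortened code: `C` restricted to the complement of the support of `c`
-- (the residual code of `C` at `c`).
def residualCode (C : Submodule (ZMod 2) (ι → ZMod 2)) (c : ι → ZMod 2) :
    Submodule (ZMod 2) ({i // c i = 0} → ZMod 2) :=
  C.map (restrictToZeros c)

variable [Fintype ι]

theorem sum_subtype_eq_sum_ite {M : Type*} [AddCommMonoid M] (p : ι → Prop) [DecidablePred p]
    (f : ι → M) : ∑ j : {i // p i}, f j = ∑ i, if p i then f i else 0 := by
  rw [← sum_filter, ← sum_subtype]
  simp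

theorem card_zeros_add_hammingNorm (c : ι → ZMod 2) :
    Fintype.card {i // c i = 0} + hammingNorm c = Fintype.card ι := by
  rw [Fintype.card_subtype, hammingNorm, card_filter_add_card_filter_not, card_univ]

theorem natCast_hammingNorm {κ : Type*} [Fintype κ] (x : κ → ZMod 2) :
    (hammingNorm x : ZMod 2) = ∑ i, x i := by
  have bit : ∀ a : ZMod 2, (if a ≠ 0 then 1 else 0) = a := by decide
  simp only [hammingNorm, card_filter, Nat.cast_sum, Nat.cast_ite, Nat.cast_one, Nat.cast_zero, bit]

theorem hammingNorm_restrictToZeros (c y : ι → ZMod 2) :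
    hammingNorm (restrictToZeros c y) =
      ∑ i, if c i = 0 then (if y i ≠ 0 then 1 else 0) else 0 := by
  rw [hammingNorm, card_filter, ← sum_subtype_eq_sum_ite (fun i ↦ c i = 0)]
  rfl

theorem hammingNorm_add_hammingNorm_add (y c : ι → ZMod 2) :
    hammingNorm y + hammingNorm (y + c) =
      hammingNorm c + 2 * hammingNorm (restrictToZeros c y) := by
  have bits : ∀ a b : ZMod 2, ((if a ≠ 0 then 1 else 0) + if a + b ≠ 0 then 1 else 0) =
      (if b ≠ 0 then 1 else 0) + 2 * if b = 0 then (if a ≠ 0 then 1 else 0) else 0 := by decide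
  rw [hammingNorm_restrictToZeros]
  simp only [hammingNorm, card_filter, mul_sum, ← sum_add_distrib, Pi.add_apply, bits]

theorem sum_restrictToZeros (y c : ι → ZMod 2) :
    ∑ j, restrictToZeros c y j = ∑ i, y i * y i + ∑ i, y i * c i := by
  have bits : ∀ a b : ZMod 2, (if b = 0 then a else 0) = a * a + a * b := by decide
  simp only [restrictToZeros_apply, sum_subtype_eq_sum_ite, bits, sum_add_distrib]

variable {C : Submodule (ZMod 2) (ι → ZMod 2)} {c : ι → ZMod 2}

theorem even_hammingNorm_of_mem_residualCode (hso : ∀ x ∈ C, ∀ y ∈ C, ∑ i, x i * y i = 0)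
    (hc : c ∈ C) {x : {i // c i = 0} → ZMod 2} (hx : x ∈ residualCode C c) :
    Even (hammingNorm x) := by
  obtain ⟨y, hy, rfl⟩ := hx
  rw [← ZMod.natCast_eq_zero_iff_even, natCast_hammingNorm, sum_restrictToZeros,
    hso y hy y hy, hso y hy c hc, add_zero]

theorem le_two_mul_hammingNorm_of_mem_residualCode
    (hmin : ∀ x ∈ C, x ≠ 0 → hammingNorm c ≤ hammingNorm x) (hc : c ∈ C)
    {x : {i // c i = 0} → ZMod 2} (hx : x ∈ residualCode C c) (hx0 : x ≠ 0) :
    hammingNorm c ≤ 2 * hammingNorm x := by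
  obtain ⟨y, hy, rfl⟩ := hx
  have hy0 : y ≠ 0 := by rintro rfl; exact hx0 (map_zero _)
  have hyc0 : y + c ≠ 0 := by
    intro h
    apply hx0
    rw [← restrictToZeros_add_self, h, map_zero]
  have := hammingNorm_add_hammingNorm_add y c
  have := hmin y hy hy0
  have := hmin (y + c) (C.add_mem hy hc) hyc0
  omega

theorem eq_zero_or_eq_of_restrictToZeros_eq_zero
    (hmin : ∀ x ∈ C, x ≠ 0 → hammingNorm c ≤ hammingNorm x) (hc : c ∈ C) (hc0 : c ≠ 0)
    {y : ι → ZMod 2} (hy : y ∈ C) (hy0 : restrictToZeros c y = 0) : y = 0 ∨ y = c := by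
  have hsum := hammingNorm_add_hammingNorm_add y c
  rw [hy0, hammingNorm_zero] at hsum
  by_contra! h
  have hyc0 : y + c ≠ 0 := fun hyc ↦ h.2 <| by
    rw [eq_neg_of_add_eq_zero_left hyc]
    exact funext fun i ↦ ZMod.neg_eq_self_mod_two (c i)
  have := hmin y hy h.1
  have := hmin (y + c) (C.add_mem hy hc) hyc0
  exact hc0 (hammingNorm_eq_zero.1 (by omega))

theorem finrank_residualCode_add_one (hmin : ∀ x ∈ C, x ≠ 0 → hammingNorm c ≤ hammingNorm x)
    (hc : c ∈ C) (hc0 : c ≠ 0) :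
    finrank (ZMod 2) (residualCode C c) + 1 = finrank (ZMod 2) C := by
  set f := (restrictToZeros c).comp C.subtype
  have hrange : LinearMap.range f = residualCode C c := by
    rw [LinearMap.range_comp, Submodule.range_subtype, residualCode]
  have hker : LinearMap.ker f = Submodule.span (ZMod 2) {⟨c, hc⟩} := by
    refine le_antisymm (fun y hy ↦ ?_) ?_
    · rw [Submodule.mem_span_singleton]
      rcases eq_zero_or_eq_of_restrictToZeros_eq_zero hmin hc hc0 y.2 hy with h | h
      · exact ⟨0, by ext1; simp [h]⟩
      · exact ⟨1, by ext1; simp [h]⟩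
    · rw [Submodule.span_le, Set.singleton_subset_iff, SetLike.mem_coe, LinearMap.mem_ker]
      exact restrictToZeros_self c
  rw [← hrange, ← LinearMap.finrank_range_add_finrank_ker f, hker,
    finrank_span_singleton (by simpa using hc0)]

end Residual

theorem no_so_31m13_general (m : ℕ) :
    (∀ (C : Submodule (ZMod 2) (Fin (31 * m + 13) → ZMod 2)) (d : ℕ),
      Module.finrank (ZMod 2) C = 5 → IsMinDist C d → d ≤ 16 * m + 6) ∧
    (¬ ∃ C : Submodule (ZMod 2) (Fin (15 * m + 7) → ZMod 2),
      Module.finrank (ZMod 2) C = 4 ∧ (∀ x ∈ C, ∑ i, x i = 0) ∧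
        ∀ x ∈ C, x ≠ 0 → 8 * m + 4 ≤ hammingNorm x) ∧
    (¬ ∃ C : Submodule (ZMod 2) (Fin (31 * m + 13) → ZMod 2),
      IsSO C ∧ Module.finrank (ZMod 2) C = 5 ∧ IsMinDist C (16 * m + 6)) := by
  have no_15m7_4_code : ∀ {ι : Type} [Fintype ι] (C : Submodule (ZMod 2) (ι → ZMod 2)),
      Fintype.card ι = 15 * m + 7 → finrank (ZMod 2) C = 4 →
        ¬ ∀ x ∈ C, x ≠ 0 → 8 * m + 4 ≤ hammingNorm x := by
    intro ι _ C hn hk hd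
    have := plotkin_bound C hd
    rw [hk, hn] at this
    omega
  refine ⟨fun C d hk hd ↦ ?_, fun ⟨C, hk, _, hd⟩ ↦ no_15m7_4_code C (Fintype.card_fin _) hk hd, ?_⟩
  · have := plotkin_bound C hd.2
    rw [hk, Fintype.card_fin] at this
    omega
  · rintro ⟨C, hso, hk, ⟨c, hc, hc0, hwc⟩, hmin⟩
    rw [← hwc] at hmin
    refine no_15m7_4_code (residualCode C c) ?_ ?_ fun x hx hx0 ↦ ?_
    · have := card_zeros_add_hammingNorm c
      rw [Fintype.card_fin] at this
      omega
    · have := finrank_residualCode_add_one hmin hc hc0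
      omega
    · obtain ⟨k, hk⟩ := even_hammingNorm_of_mem_residualCode hso hc hx
      have := le_two_mul_hammingNorm_of_mem_residualCode hmin hc hx hx0
      omega

/-- For `m ≥ 1`: any binary `[31m+13, 5]` code has minimum distance at most `16m+6`;
there is no even-like binary `[15m+7, 4]` code with minimum distance `≥ 8m+4`; and
consequently there is no binary self-orthogonal `[31m+13, 5, 16m+6]` code. -/
theorem no_so_31m13 (m : ℕ) (hm : 1 ≤ m) :
    (∀ (C : Submodule (ZMod 2) (Fin (31 * m + 13) → ZMod 2)) (d : ℕ),
      Module.finrank (ZMod 2) C = 5 → IsMinDist C d → d ≤ 16 * m + 6) ∧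
    (¬ ∃ C : Submodule (ZMod 2) (Fin (15 * m + 7) → ZMod 2),
      Module.finrank (ZMod 2) C = 4 ∧ (∀ x ∈ C, ∑ i, x i = 0) ∧
        ∀ x ∈ C, x ≠ 0 → 8 * m + 4 ≤ hammingNorm x) ∧
    (¬ ∃ C : Submodule (ZMod 2) (Fin (31 * m + 13) → ZMod 2),
      IsSO C ∧ Module.finrank (ZMod 2) C = 5 ∧ IsMinDist C (16 * m + 6)) :=
  no_so_31m13_general m
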